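/- arXiv:1812.03043 — 2 statements merged into one kernel-verified Lean document; each statement's English description precedes it below -/
import Mathlib

section
/- Let N ≥ 3 be an integer, δ ∈ ℝ with δ > 2/(N−2), and B > 0, C > 0. If a > (2C/(δ(N−2)))·[C(δ(N−2)−2)/(δ(N−2)B)]^{(δ(N−2)−2)/2}, then for every y > 0 one has a·y^{1+δ} + B·y − C·y^{N/(N−2)} > 0. -/
/-!
Write `q = N/(N-2)` as the convex combination `w (1 + δ) + (1 - w) · 1` with `w = 2/(δ(N-2)) ∈ (0,1)`.
Then `y^q = (y^{1+δ})^w y^{1-w}`, and weighted AM-GM with a free scale `D` bounds `C y^q` by a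
multiple of `y^{1+δ}` plus a multiple of `y`. Choosing `D` so that the second term is exactly `B y`
makes the first coefficient the explicit threshold on `a`.
-/

open Real

theorem rpow_mul_rpow_one_sub_le {w a b D : ℝ} (hw₀ : 0 < w) (hw₁ : w ≤ 1)
    (ha : 0 ≤ a) (hb : 0 ≤ b) (hD : 0 < D) :
    a ^ w * b ^ (1 - w) ≤ w * (D ^ ((1 - w) / w) * a) + (1 - w) * (b / D) := by
  have hscale : (D ^ ((1 - w) / w) * a) ^ w * (b / D) ^ (1 - w) = a ^ w * b ^ (1 - w) := by
    rw [mul_rpow (by positivity) ha, ← rpow_mul hD.le, div_mul_cancel₀ _ hw₀.ne',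
      div_rpow hb hD.le]
    field_simp
  rw [← hscale]
  exact geom_mean_le_arith_mean2_weighted hw₀.le (sub_nonneg.mpr hw₁) (by positivity)
    (by positivity) (add_sub_cancel w 1)

theorem mul_rpow_le_of_interpolation {w p B C y : ℝ} (hw₀ : 0 < w) (hw₁ : w < 1)
    (hB : 0 < B) (hC : 0 < C) (hy : 0 < y) :
    C * y ^ (w * p + (1 - w)) ≤
      w * C * ((1 - w) * C / B) ^ ((1 - w) / w) * y ^ p + B * y := by
  set D := (1 - w) * C / B
  have hD : 0 < D := div_pos (mul_pos (sub_pos.mpr hw₁) hC) hB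
  have hsplit : y ^ (w * p + (1 - w)) = (y ^ p) ^ w * y ^ (1 - w) := by
    rw [rpow_add hy, mul_comm w p, rpow_mul hy.le]
  have hlinear : C * ((1 - w) * (y / D)) = B * y := by
    simp only [D]
    field_simp [(sub_pos.mpr hw₁).ne']
  calc C * y ^ (w * p + (1 - w))
      ≤ C * (w * (D ^ ((1 - w) / w) * y ^ p) + (1 - w) * (y / D)) := by
        rw [hsplit]
        exact mul_le_mul_of_nonneg_left
          (rpow_mul_rpow_one_sub_le hw₀ hw₁.le (by positivity) hy.le hD) hC.le
    _ = w * C * D ^ ((1 - w) / w) * y ^ p + B * y := by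
        rw [mul_add, hlinear]
        ring

theorem stmt_5 (N : ℕ) (hN : 3 ≤ N) (δ B C a : ℝ) (hδ : 2 / ((N : ℝ) - 2) < δ)
    (hB : 0 < B) (hC : 0 < C)
    (ha : 2 * C / (δ * ((N : ℝ) - 2)) *
        (C * (δ * ((N : ℝ) - 2) - 2) / (δ * ((N : ℝ) - 2) * B)) ^
          ((δ * ((N : ℝ) - 2) - 2) / 2) < a) :
    ∀ y : ℝ, 0 < y → 0 < a * y ^ (1 + δ) + B * y - C * y ^ ((N : ℝ) / ((N : ℝ) - 2)) := by
  intro y hy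
  have hM : (0 : ℝ) < (N : ℝ) - 2 := by
    have : (3 : ℝ) ≤ N := by exact_mod_cast hN
    linarith
  have hκ : 2 < δ * ((N : ℝ) - 2) := by rwa [div_lt_iff₀ hM] at hδ
  set κ := δ * ((N : ℝ) - 2)
  have hκ₀ : 0 < κ := by linarith
  have hw : 2 / κ < 1 := (div_lt_one hκ₀).mpr hκ
  have hq : (N : ℝ) / ((N : ℝ) - 2) = 2 / κ * (1 + δ) + (1 - 2 / κ) := by
    have hδ₀ : 0 < δ := (div_pos two_pos hM).trans hδ
    simp only [κ]
    field_simp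
    ring
  have hthreshold : 2 / κ * C * ((1 - 2 / κ) * C / B) ^ ((1 - 2 / κ) / (2 / κ)) =
      2 * C / κ * (C * (κ - 2) / (κ * B)) ^ ((κ - 2) / 2) := by
    rw [show (1 - 2 / κ) * C / B = C * (κ - 2) / (κ * B) by field_simp,
      show (1 - 2 / κ) / (2 / κ) = (κ - 2) / 2 by field_simp]
    ring
  have hbound := mul_rpow_le_of_interpolation (p := 1 + δ) (by positivity) hw hB hC hy
  rw [← hq, hthreshold] at hbound
  nlinarith [mul_lt_mul_of_pos_right ha (rpow_pos_of_pos hy (1 + δ))]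
end

section
/- Let N ≥ 3 be an integer, δ = 2/(N−2), p ∈ ℝ with 2 < p < 2N/(N−2), and B > 0, C > 0, C′ > 0. If a > C′ + ((p−2)/(2δ))·[(2(δ+1)−p)/(2δB)]^{(2(δ+1)−p)/(p−2)}·C^{2δ/(p−2)}, then for every y > 0 one has a·y^{1+δ} + B·y − C′·y^{N/(N−2)} − C·y^{p/2} > 0. -/
/-!
Since `1 < p/2 < 1 + δ`, write `p/2 = θ (1 + δ) + (1 - θ)` with `θ = (p - 2)/(2δ) ∈ (0, 1)`.
Weighted AM-GM (Young's inequality) then gives `C y^{p/2} ≤ K y^{1+δ} + B y` for every `y > 0`,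
where `K` is exactly the constant added to `C'` in the hypothesis on `a`. As `N/(N-2) = 1 + δ`,
the expression is at least `(a - C' - K) y^{1+δ} > 0`.
-/

open Real

lemma mul_rpow_mul_rpow_le_young {θ B C u v : ℝ} (hθ₀ : 0 < θ) (hθ₁ : θ < 1) (hB : 0 < B)
    (hC : 0 ≤ C) (hu : 0 ≤ u) (hv : 0 ≤ v) :
    C * (u ^ θ * v ^ (1 - θ)) ≤
      θ * (((1 - θ) / B) ^ ((1 - θ) / θ) * C ^ (1 / θ)) * u + B * v := by
  set A := (1 - θ) / B
  set E := A ^ ((1 - θ) / θ) * C ^ (1 / θ)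
  have h1θ : 0 < 1 - θ := by linarith
  have hA : 0 < A := div_pos h1θ hB
  have hEθ : E ^ θ = A ^ (1 - θ) * C := by
    rw [mul_rpow (by positivity) (by positivity), ← rpow_mul hA.le, ← rpow_mul hC,
      div_mul_cancel₀ _ hθ₀.ne', one_div_mul_cancel hθ₀.ne', rpow_one]
  have hAB : A ^ (1 - θ) * (B / (1 - θ)) ^ (1 - θ) = 1 := by
    have : A * (B / (1 - θ)) = 1 := by simp only [A]; field_simp
    rw [← mul_rpow hA.le (by positivity), this, one_rpow]
  have hE : 0 ≤ E := by positivity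
  have hB' : 0 ≤ B / (1 - θ) := by positivity
  calc C * (u ^ θ * v ^ (1 - θ))
      = (A ^ (1 - θ) * (B / (1 - θ)) ^ (1 - θ)) * C * (u ^ θ * v ^ (1 - θ)) := by
        rw [hAB, one_mul]
    _ = (E * u) ^ θ * (B / (1 - θ) * v) ^ (1 - θ) := by
        rw [mul_rpow hE hu, mul_rpow hB' hv, hEθ]
        ring
    _ ≤ θ * (E * u) + (1 - θ) * (B / (1 - θ) * v) :=
        geom_mean_le_arith_mean2_weighted hθ₀.le h1θ.le (mul_nonneg hE hu) (mul_nonneg hB' hv)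
          (add_sub_cancel θ 1)
    _ = θ * E * u + B * v := by field_simp

lemma mul_rpow_half_le_young {δ p B C y : ℝ} (hδ : 0 < δ) (hp₂ : 2 < p) (hp : p < 2 * (δ + 1))
    (hB : 0 < B) (hC : 0 ≤ C) (hy : 0 ≤ y) :
    C * y ^ (p / 2) ≤
      (p - 2) / (2 * δ) * ((2 * (δ + 1) - p) / (2 * δ * B)) ^ ((2 * (δ + 1) - p) / (p - 2)) *
        C ^ (2 * δ / (p - 2)) * y ^ (1 + δ) + B * y := by
  set θ := (p - 2) / (2 * δ)
  have hθ₀ : 0 < θ := div_pos (by linarith) (by linarith)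
  have hθ₁ : θ < 1 := (div_lt_one (by linarith)).2 (by linarith)
  have hsplit : y ^ (p / 2) = (y ^ (1 + δ)) ^ θ * y ^ (1 - θ) := by
    rw [← rpow_mul hy, ← rpow_add' hy (show (0 : ℝ) < _ by nlinarith [mul_pos hδ hθ₀]).ne']
    congr 1
    simp only [θ]
    field_simp
    ring
  have hA : (1 - θ) / B = (2 * (δ + 1) - p) / (2 * δ * B) := by
    simp only [θ]; field_simp; ring
  have hA_exp : (1 - θ) / θ = (2 * (δ + 1) - p) / (p - 2) := by
    simp only [θ]; field_simp; ring
  have hC_exp : 1 / θ = 2 * δ / (p - 2) := by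
    simp only [θ]; field_simp
  have young := mul_rpow_mul_rpow_le_young hθ₀ hθ₁ hB hC (rpow_nonneg hy (1 + δ)) hy
  rwa [← hsplit, hA, hA_exp, hC_exp, ← mul_assoc] at young

theorem stmt_6_general (N : ℕ) (hN : 3 ≤ N) (δ p B C C' a : ℝ) (hδ : δ = 2 / ((N : ℝ) - 2))
    (hp2 : 2 < p) (hpN : p < 2 * (N : ℝ) / ((N : ℝ) - 2))
    (hB : 0 < B) (hC : 0 < C)
    (ha : C' + (p - 2) / (2 * δ) *
        ((2 * (δ + 1) - p) / (2 * δ * B)) ^ ((2 * (δ + 1) - p) / (p - 2)) *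
        C ^ (2 * δ / (p - 2)) < a) :
    ∀ y : ℝ, 0 < y →
      0 < a * y ^ (1 + δ) + B * y - C' * y ^ ((N : ℝ) / ((N : ℝ) - 2)) - C * y ^ (p / 2) := by
  intro y hy
  have hN₂ : (0 : ℝ) < N - 2 := by
    have : (3 : ℝ) ≤ N := by exact_mod_cast hN
    linarith
  have hδ₀ : 0 < δ := hδ ▸ by positivity
  have hp : p < 2 * (δ + 1) := by
    convert hpN using 1
    rw [hδ]; field_simp; ring
  have hexp : (N : ℝ) / (N - 2) = 1 + δ := by
    rw [hδ]; field_simp; ring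
  have young := mul_rpow_half_le_young hδ₀ hp2 hp hB hC.le hy.le
  have hgap := mul_pos (sub_pos.2 ha) (rpow_pos_of_pos hy (1 + δ))
  rw [hexp]
  nlinarith

theorem stmt_6 (N : ℕ) (hN : 3 ≤ N) (δ p B C C' a : ℝ) (hδ : δ = 2 / ((N : ℝ) - 2))
    (hp2 : 2 < p) (hpN : p < 2 * (N : ℝ) / ((N : ℝ) - 2))
    (hB : 0 < B) (hC : 0 < C) (hC' : 0 < C')
    (ha : C' + (p - 2) / (2 * δ) *
        ((2 * (δ + 1) - p) / (2 * δ * B)) ^ ((2 * (δ + 1) - p) / (p - 2)) *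
        C ^ (2 * δ / (p - 2)) < a) :
    ∀ y : ℝ, 0 < y →
      0 < a * y ^ (1 + δ) + B * y - C' * y ^ ((N : ℝ) / ((N : ℝ) - 2)) - C * y ^ (p / 2) :=
  stmt_6_general N hN δ p B C C' a hδ hp2 hpN hB hC ha
end
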